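/- Let f* be an optimal randomized prediction rule for the maximal-correlation-constrained fair classification problem: f* satisfies ρ_m(Ŷ, S) ≤ ε and its risk E[1{Ŷ ≠ Y}] is minimal among all randomized prediction rules Q_{Ŷ|X,S} satisfying ρ_m(Ŷ, S) ≤ ε. Suppose Y = h(X, S) for a deterministic function h : 𝒳 × 𝒮 → 𝒴, and s_max ∈ 𝒮 satisfies P_S(s_max) = 1/2 + δ for some δ > 0. Let r = min{|𝒮|, |𝒴|} − 1 and u(t) = max{t, √t}. Then for the prediction variable Ŷ induced by f*: E_{s∼P_S}[ TV(P_{Ŷ|S=s}, P_{Y|S=s_max}) ] ≤ (1/2 + 1/(4δ)) · u(rε). -/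

import Mathlib

/-!
The fairness constraint bounds how far `Ŷ` is from being independent of `S`: testing the maximal
correlation against the sign pattern of `P_{Ŷ,S}(·, s) - P_Ŷ P_S(s)` and the centred indicator of
`s`, and summing with Cauchy–Schwarz over the smaller alphabet, gives
`α := E_S TV(P_{Ŷ|S}, P_Ŷ) ≤ ε √r / 2 ≤ u(rε) / 2`.

Because `Y = h(X, S)`, a rule may move the label along a maximal coupling of `P_{Y|S=s}` and
`q := P_{Y|S=s_max}`. Its prediction has law `q` whatever `S` is, so it is fair, and its risk is
`E_S TV(P_{Y|S}, q)`. Comparing the optimal rule with it through the triangle inequality, where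
`s_max` carries the excess weight `2 P_S(s_max) - 1 = 2δ`, gives `2δ β ≤ α` for
`β := TV(P_Ŷ, q)`; hence `E_S TV(P_{Ŷ|S}, q) ≤ α + β ≤ (1/2 + 1/(4δ)) u(rε)`.
-/

open Finset

noncomputable section

variable {𝒳 𝒴 𝒮 : Type*} [Fintype 𝒳] [Fintype 𝒴] [Fintype 𝒮] [DecidableEq 𝒴]

/-- Total variation distance between two finitely supported distributions on `𝒴`,
`TV(p, q) = (1/2) ∑ y, |p y - q y|`. -/
def TV (p q : 𝒴 → ℝ) : ℝ := (1 / 2) * ∑ y, |p y - q y|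

/-- Marginal distribution of the sensitive attribute `S` under the joint `P` of `(X, Y, S)`. -/
def margS (P : 𝒳 → 𝒴 → 𝒮 → ℝ) (s : 𝒮) : ℝ := ∑ x, ∑ y, P x y s

/-- Conditional distribution of the label `Y` given `S = s`. -/
def condYS (P : 𝒳 → 𝒴 → 𝒮 → ℝ) (s : 𝒮) (y : 𝒴) : ℝ := (∑ x, P x y s) / margS P s

/-- A randomized prediction rule `Q`: for every `(x, s)`, `Q x s` is a probability
distribution on labels. -/
def IsRule (Q : 𝒳 → 𝒮 → 𝒴 → ℝ) : Prop :=
  (∀ x s y, 0 ≤ Q x s y) ∧ ∀ x s, ∑ y, Q x s y = 1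

/-- The risk `E[1{Ŷ ≠ Y}]` of the rule `Q` under the joint distribution induced by `P` and
`Q` (in which `Ŷ` is conditionally independent of `Y` given `(X, S)`). -/
def risk (P : 𝒳 → 𝒴 → 𝒮 → ℝ) (Q : 𝒳 → 𝒮 → 𝒴 → ℝ) : ℝ :=
  ∑ x, ∑ y, ∑ s, ∑ yh, P x y s * Q x s yh * (if yh = y then (0 : ℝ) else 1)

/-- Joint distribution of `(Ŷ, S)` induced by `P` and the rule `Q`. -/
def jointYhatS (P : 𝒳 → 𝒴 → 𝒮 → ℝ) (Q : 𝒳 → 𝒮 → 𝒴 → ℝ) (yh : 𝒴) (s : 𝒮) : ℝ :=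
  ∑ x, ∑ y, P x y s * Q x s yh

/-- Marginal distribution of the prediction `Ŷ`. -/
def margYhat (P : 𝒳 → 𝒴 → 𝒮 → ℝ) (Q : 𝒳 → 𝒮 → 𝒴 → ℝ) (yh : 𝒴) : ℝ :=
  ∑ s, jointYhatS P Q yh s

/-- Conditional distribution of the prediction `Ŷ` given `S = s`. -/
def condYhatS (P : 𝒳 → 𝒴 → 𝒮 → ℝ) (Q : 𝒳 → 𝒮 → 𝒴 → ℝ) (s : 𝒮) (yh : 𝒴) : ℝ :=
  jointYhatS P Q yh s / margS P s

/-- Hirschfeld–Gebelein–Rényi maximal correlation between the prediction `Ŷ` and `S`: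
the supremum of `E[f(Ŷ) g(S)]` over `f, g` with zero mean and unit second moment. -/
def maxCorr (P : 𝒳 → 𝒴 → 𝒮 → ℝ) (Q : 𝒳 → 𝒮 → 𝒴 → ℝ) : ℝ :=
  sSup { c : ℝ | ∃ f : 𝒴 → ℝ, ∃ g : 𝒮 → ℝ,
    (∑ yh, margYhat P Q yh * f yh = 0) ∧ (∑ s, margS P s * g s = 0) ∧
    (∑ yh, margYhat P Q yh * f yh ^ 2 = 1) ∧ (∑ s, margS P s * g s ^ 2 = 1) ∧
    c = ∑ yh, ∑ s, jointYhatS P Q yh s * f yh * g s }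

theorem Real.sSup_nonneg_of_forall_neg_mem {s : Set ℝ} (hs : ∀ x ∈ s, -x ∈ s) :
    0 ≤ sSup s := by
  by_cases hb : BddAbove s
  · rcases s.eq_empty_or_nonempty with rfl | ⟨x, hx⟩
    · exact Real.sSup_empty.ge
    · linarith [le_csSup hb hx, le_csSup hb (hs x hx)]
  · exact (Real.sSup_of_not_bddAbove hb).ge

section MaximalCorrelation

variable {α β : Type*} [Fintype α] [Fintype β]

/-- `J` is the joint law of a pair `(A, B)`, with marginals `∑ b, J a b` and `∑ a, J a b`;
`sSup (correlationSet J)` is the maximal correlation `ρ_m(A, B)`. -/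
def correlationSet (J : α → β → ℝ) : Set ℝ :=
  {c | ∃ (f : α → ℝ) (g : β → ℝ),
    (∑ a, (∑ b, J a b) * f a = 0) ∧ (∑ b, (∑ a, J a b) * g b = 0) ∧
    (∑ a, (∑ b, J a b) * f a ^ 2 = 1) ∧ (∑ b, (∑ a, J a b) * g b ^ 2 = 1) ∧
    c = ∑ a, ∑ b, J a b * f a * g b}

def maximalCorrelation (J : α → β → ℝ) : ℝ := sSup (correlationSet J)

variable {J : α → β → ℝ}

theorem neg_mem_correlationSet {c : ℝ} (hc : c ∈ correlationSet J) :
    -c ∈ correlationSet J := by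
  obtain ⟨f, g, hf, hg, hf2, hg2, rfl⟩ := hc
  refine ⟨-f, g, ?_, hg, ?_, hg2, ?_⟩
  · simpa using hf
  · simpa using hf2
  · simp [sum_neg_distrib]

theorem maximalCorrelation_nonneg (J : α → β → ℝ) : 0 ≤ maximalCorrelation J :=
  Real.sSup_nonneg_of_forall_neg_mem fun _ => neg_mem_correlationSet

theorem sq_sum_sum_mul_mul_le (hJ : ∀ a b, 0 ≤ J a b) (f : α → ℝ) (g : β → ℝ) :
    (∑ a, ∑ b, J a b * f a * g b) ^ 2 ≤
      (∑ a, (∑ b, J a b) * f a ^ 2) * ∑ b, (∑ a, J a b) * g b ^ 2 := by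
  have hf : ∑ a, (∑ b, J a b) * f a ^ 2 = ∑ p : α × β, J p.1 p.2 * f p.1 ^ 2 := by
    simp [Fintype.sum_prod_type, sum_mul]
  have hg : ∑ b, (∑ a, J a b) * g b ^ 2 = ∑ p : α × β, J p.1 p.2 * g p.2 ^ 2 := by
    rw [Fintype.sum_prod_type, sum_comm]
    simp [sum_mul]
  rw [hf, hg, ← Fintype.sum_prod_type']
  exact sum_sq_le_sum_mul_sum_of_sq_le_mul _ (fun p _ => mul_nonneg (hJ _ _) (sq_nonneg _))
    (fun p _ => mul_nonneg (hJ _ _) (sq_nonneg _)) fun p _ => (by ring : _ = _).le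

theorem bddAbove_correlationSet (hJ : ∀ a b, 0 ≤ J a b) : BddAbove (correlationSet J) := by
  refine ⟨1, ?_⟩
  rintro _ ⟨f, g, -, -, hf2, hg2, rfl⟩
  have := sq_sum_sum_mul_mul_le hJ f g
  rw [hf2, hg2, one_mul] at this
  nlinarith

theorem sum_sum_mul_mul_le_maximalCorrelation (hJ : ∀ a b, 0 ≤ J a b) {f : α → ℝ}
    {g : β → ℝ} (hf : ∑ a, (∑ b, J a b) * f a = 0) (hg : ∑ b, (∑ a, J a b) * g b = 0) :
    ∑ a, ∑ b, J a b * f a * g b ≤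
      maximalCorrelation J * √(∑ a, (∑ b, J a b) * f a ^ 2) *
        √(∑ b, (∑ a, J a b) * g b ^ 2) := by
  set A := √(∑ a, (∑ b, J a b) * f a ^ 2)
  set B := √(∑ b, (∑ a, J a b) * g b ^ 2)
  have hvarf : 0 ≤ ∑ a, (∑ b, J a b) * f a ^ 2 :=
    sum_nonneg fun a _ => mul_nonneg (sum_nonneg fun b _ => hJ a b) (sq_nonneg _)
  have hvarg : 0 ≤ ∑ b, (∑ a, J a b) * g b ^ 2 :=
    sum_nonneg fun b _ => mul_nonneg (sum_nonneg fun a _ => hJ a b) (sq_nonneg _)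
  have hA2 : A ^ 2 = ∑ a, (∑ b, J a b) * f a ^ 2 := Real.sq_sqrt hvarf
  have hB2 : B ^ 2 = ∑ b, (∑ a, J a b) * g b ^ 2 := Real.sq_sqrt hvarg
  have hCS : ∑ a, ∑ b, J a b * f a * g b ≤ A * B := by
    refine (le_abs_self _).trans ((Real.abs_le_sqrt (sq_sum_sum_mul_mul_le hJ f g)).trans_eq ?_)
    exact Real.sqrt_mul hvarf _
  rcases (mul_nonneg (Real.sqrt_nonneg _) (Real.sqrt_nonneg _) : 0 ≤ A * B).eq_or_lt with hAB | hAB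
  · rw [mul_assoc, ← hAB, mul_zero]
    exact hCS.trans hAB.ge
  obtain ⟨hA, hB⟩ := mul_ne_zero_iff.1 hAB.ne'
  have hmem : (∑ a, ∑ b, J a b * f a * g b) / (A * B) ∈ correlationSet J := by
    refine ⟨fun a => f a / A, fun b => g b / B, ?_, ?_, ?_, ?_, ?_⟩
    · simp only [mul_div_assoc', ← sum_div, hf, zero_div]
    · simp only [mul_div_assoc', ← sum_div, hg, zero_div]
    · simp only [div_pow, mul_div_assoc', ← sum_div, ← hA2]
      exact div_self (pow_ne_zero 2 hA)
    · simp only [div_pow, mul_div_assoc', ← sum_div, ← hB2]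
      exact div_self (pow_ne_zero 2 hB)
    · simp only [sum_div]
      refine sum_congr rfl fun a _ => sum_congr rfl fun b _ => ?_
      field_simp
  calc ∑ a, ∑ b, J a b * f a * g b
      = (∑ a, ∑ b, J a b * f a * g b) / (A * B) * (A * B) := (div_mul_cancel₀ _ hAB.ne').symm
    _ ≤ maximalCorrelation J * (A * B) :=
        mul_le_mul_of_nonneg_right (le_csSup (bddAbove_correlationSet hJ) hmem) hAB.le
    _ = maximalCorrelation J * A * B := (mul_assoc _ _ _).symm

/-- Only `g` needs to be centred: subtracting its mean from `f` leaves the left side unchanged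
and can only lower the variance of `f`. -/
theorem sum_sum_mul_mul_le_maximalCorrelation_of_right (hJ : ∀ a b, 0 ≤ J a b)
    (hJ1 : ∑ a, ∑ b, J a b = 1) (f : α → ℝ) {g : β → ℝ} (hg : ∑ b, (∑ a, J a b) * g b = 0) :
    ∑ a, ∑ b, J a b * f a * g b ≤
      maximalCorrelation J * √(∑ a, (∑ b, J a b) * f a ^ 2) *
        √(∑ b, (∑ a, J a b) * g b ^ 2) := by
  set μ := ∑ a, (∑ b, J a b) * f a
  have hconst : ∀ c : ℝ, ∑ a, ∑ b, J a b * c * g b = c * ∑ b, (∑ a, J a b) * g b := by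
    intro c
    rw [sum_comm, mul_sum]
    refine sum_congr rfl fun b _ => ?_
    rw [sum_mul, mul_sum]
    exact sum_congr rfl fun a _ => by ring
  have hshift : ∑ a, ∑ b, J a b * (f a - μ) * g b = ∑ a, ∑ b, J a b * f a * g b := by
    simp only [mul_sub, sub_mul, sum_sub_distrib, hconst, hg, mul_zero, sub_zero]
  have hcentered : ∑ a, (∑ b, J a b) * (f a - μ) = 0 := by
    simp only [mul_sub, sum_sub_distrib, ← sum_mul, hJ1, one_mul]
    exact sub_self μ
  have hvar : ∑ a, (∑ b, J a b) * (f a - μ) ^ 2 = ∑ a, (∑ b, J a b) * f a ^ 2 - μ ^ 2 := by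
    have : ∀ a, (∑ b, J a b) * (f a - μ) ^ 2
        = (∑ b, J a b) * f a ^ 2 - 2 * μ * ((∑ b, J a b) * f a) + μ ^ 2 * ∑ b, J a b :=
      fun a => by ring
    simp only [this, sum_add_distrib, sum_sub_distrib, ← mul_sum, hJ1]
    ring
  rw [← hshift]
  refine (sum_sum_mul_mul_le_maximalCorrelation hJ hcentered hg).trans ?_
  refine mul_le_mul_of_nonneg_right (mul_le_mul_of_nonneg_left (Real.sqrt_le_sqrt ?_)
    (maximalCorrelation_nonneg J)) (Real.sqrt_nonneg _)
  rw [hvar]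
  linarith [sq_nonneg μ]

theorem sum_abs_sub_mul_le_maximalCorrelation (hJ : ∀ a b, 0 ≤ J a b)
    (hJ1 : ∑ a, ∑ b, J a b = 1) (b₀ : β) :
    ∑ a, |J a b₀ - (∑ b, J a b) * ∑ a', J a' b₀| ≤
      maximalCorrelation J * √((∑ a, J a b₀) * (1 - ∑ a, J a b₀)) := by
  classical
  set w := ∑ a, J a b₀
  -- Test against the sign pattern of the deviation and the centred indicator of `b₀`.
  set Δ : α → ℝ := fun a => J a b₀ - (∑ b, J a b) * w
  set f : α → ℝ := fun a => if 0 ≤ Δ a then 1 else -1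
  set g : β → ℝ := fun b => (if b = b₀ then 1 else 0) - w
  have hJ1' : ∑ b, ∑ a, J a b = 1 := by rw [sum_comm, hJ1]
  have hg : ∑ b, (∑ a, J a b) * g b = 0 := by
    simp [g, mul_sub, sum_sub_distrib, ← sum_mul, hJ1', w]
  have hf2 : ∑ a, (∑ b, J a b) * f a ^ 2 = 1 := by
    have : ∀ a, f a ^ 2 = 1 := fun a => by by_cases h : 0 ≤ Δ a <;> simp [f, h]
    simp [this, hJ1]
  have hg2 : ∑ b, (∑ a, J a b) * g b ^ 2 = w * (1 - w) := by
    have : ∀ b, (∑ a, J a b) * g b ^ 2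
        = (if b = b₀ then ∑ a, J a b else 0) * (1 - 2 * w) + w ^ 2 * ∑ a, J a b :=
      fun b => by by_cases h : b = b₀ <;> simp only [g, h, if_true, if_false] <;> ring
    simp only [this, sum_add_distrib, ← sum_mul, ← mul_sum, hJ1', sum_ite_eq', mem_univ,
      if_true]
    ring
  have hfg : ∑ a, ∑ b, J a b * f a * g b = ∑ a, |Δ a| := by
    refine sum_congr rfl fun a _ => ?_
    have : ∑ b, J a b * f a * g b = f a * Δ a := by
      simp only [g, Δ, mul_sub, mul_ite, mul_one, mul_zero, sum_sub_distrib, sum_ite_eq', mem_univ,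
        if_true, ← sum_mul]
      ring
    rw [this]
    by_cases h : 0 ≤ Δ a
    · simp [f, h, abs_of_nonneg h]
    · simp [f, h, abs_of_neg (not_le.1 h)]
  have key := sum_sum_mul_mul_le_maximalCorrelation_of_right hJ hJ1 f hg
  rwa [hfg, hf2, hg2, Real.sqrt_one, mul_one] at key

theorem correlationSet_swap_subset (J : α → β → ℝ) :
    correlationSet (Function.swap J) ⊆ correlationSet J := by
  rintro _ ⟨f, g, hf, hg, hf2, hg2, rfl⟩
  refine ⟨g, f, hg, hf, hg2, hf2, ?_⟩
  rw [sum_comm]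
  exact sum_congr rfl fun _ _ => sum_congr rfl fun _ _ => mul_right_comm _ _ _

theorem maximalCorrelation_swap (J : α → β → ℝ) :
    maximalCorrelation (Function.swap J) = maximalCorrelation J :=
  congrArg sSup
    ((correlationSet_swap_subset J).antisymm (correlationSet_swap_subset (Function.swap J)))

theorem maximalCorrelation_eq_zero_of_eq_mul {u : α → ℝ} {v : β → ℝ}
    (hJ : ∀ a b, J a b = u a * v b) (hu : ∑ a, u a = 1) : maximalCorrelation J = 0 := by
  refine le_antisymm (Real.sSup_nonpos ?_) (maximalCorrelation_nonneg J)
  rintro _ ⟨f, g, -, hg, -, -, rfl⟩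
  simp only [hJ, ← sum_mul, hu, one_mul] at hg
  have : ∑ a, ∑ b, J a b * f a * g b = (∑ a, u a * f a) * ∑ b, v b * g b := by
    rw [sum_mul]
    refine sum_congr rfl fun a _ => ?_
    rw [mul_sum]
    exact sum_congr rfl fun b _ => by rw [hJ]; ring
  rw [this, hg, mul_zero]

theorem sum_sqrt_mul_one_sub_le {ι : Type*} [Fintype ι] {w : ι → ℝ} (hw0 : ∀ i, 0 ≤ w i)
    (hw1 : ∑ i, w i = 1) : ∑ i, √(w i * (1 - w i)) ≤ √((Fintype.card ι : ℝ) - 1) := by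
  have hw_le : ∀ i, w i ≤ 1 := fun i => hw1 ▸ single_le_sum (fun j _ => hw0 j) (mem_univ i)
  have hvar : ∀ i, 0 ≤ w i * (1 - w i) := fun i => mul_nonneg (hw0 i) (by linarith [hw_le i])
  have hsq : ∑ i, √(w i * (1 - w i)) ^ 2 = 1 - ∑ i, w i ^ 2 := by
    rw [sum_congr rfl fun i _ => Real.sq_sqrt (hvar i)]
    simp only [mul_sub, mul_one, sum_sub_distrib, hw1, sq]
  have hcs := sq_sum_le_card_mul_sum_sq (s := univ) (f := fun i => √(w i * (1 - w i)))
  have hcs' := sq_sum_le_card_mul_sum_sq (s := univ) (f := w)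
  rw [card_univ, hsq] at hcs
  rw [card_univ, hw1] at hcs'
  refine Real.le_sqrt_of_sq_le ?_
  nlinarith

theorem sum_sum_abs_sub_mul_le_mul_sqrt_card (hJ : ∀ a b, 0 ≤ J a b)
    (hJ1 : ∑ a, ∑ b, J a b = 1) :
    ∑ a, ∑ b, |J a b - (∑ b', J a b') * ∑ a', J a' b| ≤
      maximalCorrelation J * √((Fintype.card β : ℝ) - 1) := by
  have hJ1' : ∑ b, ∑ a, J a b = 1 := by rw [sum_comm, hJ1]
  calc ∑ a, ∑ b, |J a b - (∑ b', J a b') * ∑ a', J a' b|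
      = ∑ b, ∑ a, |J a b - (∑ b', J a b') * ∑ a', J a' b| := sum_comm
    _ ≤ ∑ b, maximalCorrelation J * √((∑ a, J a b) * (1 - ∑ a, J a b)) :=
        sum_le_sum fun b _ => sum_abs_sub_mul_le_maximalCorrelation hJ hJ1 b
    _ ≤ maximalCorrelation J * √((Fintype.card β : ℝ) - 1) := by
        rw [← mul_sum]
        exact mul_le_mul_of_nonneg_left (sum_sqrt_mul_one_sub_le
          (fun b => sum_nonneg fun a _ => hJ a b) hJ1') (maximalCorrelation_nonneg J)

theorem sum_sum_abs_sub_mul_le_mul_sqrt_min_card (hJ : ∀ a b, 0 ≤ J a b)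
    (hJ1 : ∑ a, ∑ b, J a b = 1) :
    ∑ a, ∑ b, |J a b - (∑ b', J a b') * ∑ a', J a' b| ≤
      maximalCorrelation J * √(min (Fintype.card α : ℝ) (Fintype.card β) - 1) := by
  have hswap := sum_sum_abs_sub_mul_le_mul_sqrt_card (J := Function.swap J) (fun b a => hJ a b)
    (by rw [sum_comm]; exact hJ1)
  rw [maximalCorrelation_swap, sum_comm] at hswap
  simp only [Function.swap, mul_comm (∑ a', J a' _)] at hswap
  rw [← min_sub_sub_right, Real.sqrt_monotone.map_min,
    mul_min_of_nonneg _ _ (maximalCorrelation_nonneg J)]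
  exact le_min hswap (sum_sum_abs_sub_mul_le_mul_sqrt_card hJ hJ1)

end MaximalCorrelation

section TotalVariation

variable {α : Type*} [Fintype α]

theorem TV_comm (p q : α → ℝ) : TV p q = TV q p := by
  simp only [TV, abs_sub_comm]

theorem TV_self (p : α → ℝ) : TV p p = 0 := by
  simp [TV]

theorem TV_triangle (p q r : α → ℝ) : TV p r ≤ TV p q + TV q r := by
  simp only [TV, ← mul_add, ← sum_add_distrib]
  gcongr with a
  exact abs_sub_le _ _ _

theorem TV_const_mul {c : ℝ} (hc : 0 ≤ c) (p q : α → ℝ) :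
    TV (fun a => c * p a) (fun a => c * q a) = c * TV p q := by
  simp only [TV, ← mul_sub, abs_mul, abs_of_nonneg hc, ← mul_sum]
  ring

theorem TV_eq_sum_sub_sum_min {p q : α → ℝ} (hpq : ∑ a, p a = ∑ a, q a) :
    TV p q = ∑ a, p a - ∑ a, min (p a) (q a) := by
  have : ∀ a, |p a - q a| = p a + q a - 2 * min (p a) (q a) := fun a => by
    rcases le_total (p a) (q a) with h | h
    · rw [abs_of_nonpos (by linarith), min_eq_left h]; ring
    · rw [abs_of_nonneg (by linarith), min_eq_right h]; ring
  simp only [TV, this, sum_sub_distrib, sum_add_distrib, ← mul_sum, ← hpq]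
  ring

end TotalVariation

section WeightedTotalVariation

variable {ι α : Type*} [Fintype ι] [Fintype α] {w : ι → ℝ}

theorem sum_mul_TV_le_add (hw0 : ∀ i, 0 ≤ w i) (hw1 : ∑ i, w i = 1) (p : ι → α → ℝ)
    (m q : α → ℝ) : ∑ i, w i * TV (p i) q ≤ ∑ i, w i * TV (p i) m + TV m q := by
  calc ∑ i, w i * TV (p i) q ≤ ∑ i, w i * (TV (p i) m + TV m q) :=
        sum_le_sum fun i _ => mul_le_mul_of_nonneg_left (TV_triangle _ _ _) (hw0 i)
    _ = ∑ i, w i * TV (p i) m + TV m q := by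
        simp only [mul_add, sum_add_distrib, ← sum_mul, hw1, one_mul]

/-- Every `i ≠ i₀` loses `TV m (r i₀)` in the triangle inequality through `m`, while `i₀` gains
it. -/
theorem sum_mul_TV_add_le (hw0 : ∀ i, 0 ≤ w i) (hw1 : ∑ i, w i = 1)
    (p r : ι → α → ℝ) (m : α → ℝ) (i₀ : ι) :
    ∑ i, w i * TV (r i) (r i₀) + (2 * w i₀ - 1) * TV m (r i₀) ≤
      ∑ i, w i * TV (p i) (r i) + ∑ i, w i * TV (p i) m := by
  classical
  have hpt : ∀ i, TV (r i) (r i₀) + ((if i = i₀ then 2 else 0) - 1) * TV m (r i₀) ≤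
      TV (p i) (r i) + TV (p i) m := by
    intro i
    have h₁ := TV_triangle m (p i) (r i)
    have h₂ := TV_triangle (r i) (p i) m
    have h₃ := TV_triangle (r i) m (r i₀)
    rw [TV_comm m (p i)] at h₁
    rw [TV_comm (r i) (p i)] at h₂
    split_ifs with h
    · subst h
      rw [TV_self]
      linarith
    · linarith
  have hweights : ∑ i, w i * ((if i = i₀ then 2 else 0) - 1) = 2 * w i₀ - 1 := by
    simp only [mul_sub, mul_one, sum_sub_distrib, hw1, mul_ite, mul_zero, sum_ite_eq', mem_univ,
      if_true]
    ring
  calc ∑ i, w i * TV (r i) (r i₀) + (2 * w i₀ - 1) * TV m (r i₀)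
      = ∑ i, w i * (TV (r i) (r i₀) + ((if i = i₀ then 2 else 0) - 1) * TV m (r i₀)) := by
        simp only [mul_add, sum_add_distrib, ← mul_assoc, ← sum_mul, hweights]
    _ ≤ ∑ i, w i * (TV (p i) (r i) + TV (p i) m) :=
        sum_le_sum fun i _ => mul_le_mul_of_nonneg_left (hpt i) (hw0 i)
    _ = ∑ i, w i * TV (p i) (r i) + ∑ i, w i * TV (p i) m := by
        simp only [mul_add, sum_add_distrib]

end WeightedTotalVariation

theorem mul_sqrt_natCast_sub_one_le_max {ε : ℝ} (hε : 0 ≤ ε) (k : ℕ) :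
    ε * √((k : ℝ) - 1) ≤ max (((k : ℝ) - 1) * ε) (√(((k : ℝ) - 1) * ε)) := by
  rcases le_or_gt k 1 with hk | hk
  · have : (k : ℝ) - 1 ≤ 0 := by
      have : (k : ℝ) ≤ 1 := by exact_mod_cast hk
      linarith
    rw [Real.sqrt_eq_zero'.2 this, mul_zero]
    exact (Real.sqrt_nonneg _).trans (le_max_right _ _)
  have hr : 1 ≤ (k : ℝ) - 1 := by
    have : (2 : ℝ) ≤ k := by exact_mod_cast hk
    linarith
  rcases le_total ε 1 with hε1 | hε1
  · refine le_max_of_le_right ?_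
    rw [← Real.sqrt_sq hε, ← Real.sqrt_mul (sq_nonneg ε), Real.sqrt_sq hε]
    have : ε ^ 2 ≤ ε := by nlinarith
    exact Real.sqrt_le_sqrt (by nlinarith)
  · refine le_max_of_le_left ?_
    rw [mul_comm]
    refine mul_le_mul_of_nonneg_right ?_ hε
    nlinarith [Real.sq_sqrt (show (0 : ℝ) ≤ k - 1 by linarith), Real.sqrt_nonneg ((k : ℝ) - 1)]

theorem exists_mul_sum_eq {α : Type*} [Fintype α] [Nonempty α] {e : α → ℝ}
    (he : ∀ a, 0 ≤ e a) :
    ∃ r : α → ℝ, (∀ a, 0 ≤ r a) ∧ ∑ a, r a = 1 ∧ ∀ a, (∑ b, e b) * r a = e a := by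
  by_cases hT : ∑ b, e b = 0
  · refine ⟨fun _ => (Fintype.card α : ℝ)⁻¹, fun _ => by positivity, ?_, fun a => ?_⟩
    · simp [Fintype.card_ne_zero]
    · rw [hT, zero_mul, (sum_eq_zero_iff_of_nonneg fun b _ => he b).1 hT a (mem_univ a)]
  · exact ⟨fun a => e a / ∑ b, e b, fun a => div_nonneg (he a) (sum_nonneg fun b _ => he b),
      by rw [← sum_div, div_self hT], fun a => mul_div_cancel₀ _ hT⟩

theorem exists_maximal_coupling {α : Type*} [Fintype α] [DecidableEq α] {p q : α → ℝ}
    (hp0 : ∀ a, 0 ≤ p a) (hp1 : ∑ a, p a = 1) (hq0 : ∀ a, 0 ≤ q a) (hq1 : ∑ a, q a = 1) :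
    ∃ K : α → α → ℝ, (∀ a b, 0 ≤ K a b) ∧ (∀ a, ∑ b, K a b = 1) ∧
      (∀ b, ∑ a, p a * K a b = q b) ∧ ∑ a, min (p a) (q a) ≤ ∑ a, p a * K a a := by
  have : Nonempty α := by
    by_contra h
    simp [not_nonempty_iff.1 h] at hp1
  set m : α → ℝ := fun a => min (p a) (q a)
  obtain ⟨r, hr0, hr1, hTr⟩ :=
    exists_mul_sum_eq (e := fun b => q b - m b) fun b => sub_nonneg.2 (min_le_right _ _)
  have hT : ∑ a, (p a - m a) = ∑ a, (q a - m a) := by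
    simp only [sum_sub_distrib, hp1, hq1]
  have hstay0 : ∀ a, 0 ≤ m a / p a := fun a => div_nonneg (le_min (hp0 a) (hq0 a)) (hp0 a)
  have hstay1 : ∀ a, m a / p a ≤ 1 := fun a => div_le_one_of_le₀ (min_le_left _ _) (hp0 a)
  have hpm : ∀ a, p a * (m a / p a) = m a := fun a => by
    rcases eq_or_ne (p a) 0 with h | h
    · simp [m, h, min_eq_left (hq0 a)]
    · exact mul_div_cancel₀ _ h
  -- Stay at `a` with probability `min (p a) (q a) / p a` (which is `0` when `p a = 0`),
  -- otherwise move according to the normalised excess `r ∝ q - min p q`.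
  refine ⟨fun a b => m a / p a * (if b = a then 1 else 0) + (1 - m a / p a) * r b,
    fun a b => ?_, fun a => ?_, fun b => ?_, ?_⟩
  · exact add_nonneg (mul_nonneg (hstay0 a) (by split_ifs <;> norm_num))
      (mul_nonneg (sub_nonneg.2 (hstay1 a)) (hr0 b))
  · simp [sum_add_distrib, ← mul_sum, hr1]
  · have : ∀ a, p a * (m a / p a * (if b = a then 1 else 0) + (1 - m a / p a) * r b) =
        (if b = a then m a else 0) + (p a - m a) * r b := fun a => by
      split_ifs <;> simp only [mul_add, mul_one, mul_zero, mul_sub, ← mul_assoc, hpm]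
    simp only [this, sum_add_distrib, sum_ite_eq, mem_univ, if_true, ← sum_mul, hT, hTr]
    ring
  · refine sum_le_sum fun a _ => ?_
    have := mul_nonneg (hp0 a) (mul_nonneg (sub_nonneg.2 (hstay1 a)) (hr0 a))
    simp only [if_true, mul_one, mul_add, hpm]
    linarith

section Model

variable (P : 𝒳 → 𝒴 → 𝒮 → ℝ) {Q : 𝒳 → 𝒮 → 𝒴 → ℝ}

section
omit [DecidableEq 𝒴]

section
omit [Fintype 𝒮]

theorem margS_nonneg (hP0 : ∀ x y s, 0 ≤ P x y s) (s : 𝒮) : 0 ≤ margS P s :=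
  sum_nonneg fun x _ => sum_nonneg fun y _ => hP0 x y s

theorem jointYhatS_nonneg (hP0 : ∀ x y s, 0 ≤ P x y s) (hQ : IsRule Q) (yh : 𝒴) (s : 𝒮) :
    0 ≤ jointYhatS P Q yh s :=
  sum_nonneg fun x _ => sum_nonneg fun y _ => mul_nonneg (hP0 x y s) (hQ.1 x s yh)

theorem sum_jointYhatS (hQ : IsRule Q) (s : 𝒮) : ∑ yh, jointYhatS P Q yh s = margS P s := by
  unfold jointYhatS
  rw [sum_comm]
  refine sum_congr rfl fun x _ => ?_
  rw [sum_comm]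
  exact sum_congr rfl fun y _ => by rw [← mul_sum, hQ.2 x s, mul_one]

theorem margS_mul_condYhatS (hS : ∀ s, 0 < margS P s) (Q : 𝒳 → 𝒮 → 𝒴 → ℝ) (s : 𝒮)
    (yh : 𝒴) :
    margS P s * condYhatS P Q s yh = jointYhatS P Q yh s :=
  mul_div_cancel₀ _ (hS s).ne'

theorem margS_mul_condYS (hS : ∀ s, 0 < margS P s) (s : 𝒮) (y : 𝒴) :
    margS P s * condYS P s y = ∑ x, P x y s :=
  mul_div_cancel₀ _ (hS s).ne'

theorem condYS_nonneg (hP0 : ∀ x y s, 0 ≤ P x y s) (hS : ∀ s, 0 < margS P s) (s : 𝒮)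
    (y : 𝒴) :
    0 ≤ condYS P s y :=
  div_nonneg (sum_nonneg fun x _ => hP0 x y s) (hS s).le

theorem sum_condYS (hS : ∀ s, 0 < margS P s) (s : 𝒮) : ∑ y, condYS P s y = 1 := by
  unfold condYS
  rw [← sum_div, sum_comm]
  exact div_self (hS s).ne'

theorem sum_sum_mul_of_deterministic (hS : ∀ s, 0 < margS P s) {h : 𝒳 → 𝒮 → 𝒴}
    (hdet : ∀ x y s, y ≠ h x s → P x y s = 0) (F : 𝒴 → 𝒴 → ℝ) (s : 𝒮) :
    ∑ x, ∑ y, P x y s * F (h x s) y = margS P s * ∑ y, condYS P s y * F y y := by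
  have hpt : ∀ x y, P x y s * F (h x s) y = P x y s * F y y := fun x y => by
    rcases eq_or_ne y (h x s) with rfl | hy
    · rfl
    · rw [hdet x y s hy, zero_mul, zero_mul]
  simp only [hpt, mul_sum, ← mul_assoc, margS_mul_condYS P hS, sum_mul]
  exact sum_comm

end

theorem sum_margS (hP1 : ∑ x, ∑ y, ∑ s, P x y s = 1) : ∑ s, margS P s = 1 := by
  unfold margS
  rw [← hP1, sum_comm]
  exact sum_congr rfl fun x _ => sum_comm

theorem maxCorr_eq_maximalCorrelation (hQ : IsRule Q) :
    maxCorr P Q = maximalCorrelation (jointYhatS P Q) := by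
  simp only [maxCorr, maximalCorrelation, correlationSet, margYhat, ← sum_jointYhatS P hQ]

theorem sum_margS_mul_TV_condYhatS_margYhat (hS : ∀ s, 0 < margS P s)
    (Q : 𝒳 → 𝒮 → 𝒴 → ℝ) :
    ∑ s, margS P s * TV (condYhatS P Q s) (margYhat P Q) =
      1 / 2 * ∑ yh, ∑ s, |jointYhatS P Q yh s - margYhat P Q yh * margS P s| := by
  have hs : ∀ s, margS P s * TV (condYhatS P Q s) (margYhat P Q) =
      1 / 2 * ∑ yh, |jointYhatS P Q yh s - margYhat P Q yh * margS P s| := fun s => by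
    rw [← TV_const_mul (hS s).le]
    simp only [margS_mul_condYhatS P hS, TV, mul_comm (margS P s)]
  rw [sum_congr rfl fun s _ => hs s, ← mul_sum, sum_comm]

theorem sum_margS_mul_TV_condYhatS_margYhat_le (hP0 : ∀ x y s, 0 ≤ P x y s)
    (hP1 : ∑ x, ∑ y, ∑ s, P x y s = 1) (hS : ∀ s, 0 < margS P s) (hQ : IsRule Q) {ε : ℝ}
    (hfair : maxCorr P Q ≤ ε) :
    ∑ s, margS P s * TV (condYhatS P Q s) (margYhat P Q) ≤
      1 / 2 * max (((min (Fintype.card 𝒮) (Fintype.card 𝒴) : ℝ) - 1) * ε)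
        (√(((min (Fintype.card 𝒮) (Fintype.card 𝒴) : ℝ) - 1) * ε)) := by
  have hJ1 : ∑ yh, ∑ s, jointYhatS P Q yh s = 1 := by
    rw [sum_comm]
    simp only [sum_jointYhatS P hQ, sum_margS P hP1]
  have hdev := sum_sum_abs_sub_mul_le_mul_sqrt_min_card (jointYhatS_nonneg P hP0 hQ) hJ1
  simp only [sum_jointYhatS P hQ, ← maxCorr_eq_maximalCorrelation P hQ] at hdev
  have hε : 0 ≤ ε := (maxCorr_eq_maximalCorrelation P hQ ▸ maximalCorrelation_nonneg _).trans hfair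
  rw [sum_margS_mul_TV_condYhatS_margYhat P hS]
  refine mul_le_mul_of_nonneg_left ?_ (by norm_num)
  calc _ ≤ maxCorr P Q * √(min (Fintype.card 𝒴 : ℝ) (Fintype.card 𝒮) - 1) := hdev
    _ ≤ ε * √(min (Fintype.card 𝒴 : ℝ) (Fintype.card 𝒮) - 1) :=
        mul_le_mul_of_nonneg_right hfair (Real.sqrt_nonneg _)
    _ ≤ _ := by
        rw [min_comm]
        exact_mod_cast mul_sqrt_natCast_sub_one_le_max hε (min (Fintype.card 𝒮) (Fintype.card 𝒴))

end

theorem risk_eq_sum (hQ : IsRule Q) :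
    risk P Q = ∑ s, (margS P s - ∑ x, ∑ y, P x y s * Q x s y) := by
  have hmiss : ∀ x y s, ∑ yh, P x y s * Q x s yh * (if yh = y then 0 else 1) =
      P x y s * (1 - Q x s y) := fun x y s => by
    simp [mul_ite, sum_ite, filter_ne', ← mul_sum, sum_erase_eq_sub, hQ.2]
  simp only [risk, hmiss]
  calc ∑ x, ∑ y, ∑ s, P x y s * (1 - Q x s y) = ∑ x, ∑ s, ∑ y, P x y s * (1 - Q x s y) :=
        sum_congr rfl fun _ _ => sum_comm
    _ = ∑ s, ∑ x, ∑ y, P x y s * (1 - Q x s y) := sum_comm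
    _ = _ := by simp only [margS, mul_sub, mul_one, sum_sub_distrib]

theorem sum_margS_mul_TV_condYhatS_condYS_le_risk (hP0 : ∀ x y s, 0 ≤ P x y s)
    (hS : ∀ s, 0 < margS P s) (hQ : IsRule Q) :
    ∑ s, margS P s * TV (condYhatS P Q s) (condYS P s) ≤ risk P Q := by
  rw [risk_eq_sum P hQ]
  refine sum_le_sum fun s _ => ?_
  have hQ1 : ∀ x y, Q x s y ≤ 1 := fun x y =>
    hQ.2 x s ▸ single_le_sum (fun y' _ => hQ.1 x s y') (mem_univ y)
  have hcorrect : ∀ y, ∑ x, P x y s * Q x s y ≤ min (jointYhatS P Q y s) (∑ x, P x y s) :=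
    fun y => le_min
      (sum_le_sum fun x _ => single_le_sum (f := fun y' => P x y' s * Q x s y)
        (fun y' _ => mul_nonneg (hP0 x y' s) (hQ.1 x s y)) (mem_univ y))
      (sum_le_sum fun x _ => mul_le_of_le_one_right (hP0 x y s) (hQ1 x y))
  rw [← TV_const_mul (hS s).le, TV_eq_sum_sub_sum_min]
  · simp only [margS_mul_condYhatS P hS, margS_mul_condYS P hS, sum_jointYhatS P hQ]
    rw [sum_comm]
    linarith [sum_le_sum fun y (_ : y ∈ univ) => hcorrect y]
  · simp only [margS_mul_condYhatS P hS, margS_mul_condYS P hS, sum_jointYhatS P hQ]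
    unfold margS
    exact sum_comm

theorem exists_rule_jointYhatS_eq_mul_and_risk_le (hP0 : ∀ x y s, 0 ≤ P x y s)
    (hS : ∀ s, 0 < margS P s) {h : 𝒳 → 𝒮 → 𝒴} (hdet : ∀ x y s, y ≠ h x s → P x y s = 0)
    {q : 𝒴 → ℝ} (hq0 : ∀ y, 0 ≤ q y) (hq1 : ∑ y, q y = 1) :
    ∃ Q' : 𝒳 → 𝒮 → 𝒴 → ℝ, IsRule Q' ∧ (∀ yh s, jointYhatS P Q' yh s = q yh * margS P s) ∧
      risk P Q' ≤ ∑ s, margS P s * TV (condYS P s) q := by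
  -- As `Y = h(X, S)`, the rule sees the label and moves it along a maximal coupling of
  -- `P_{Y|S=s}` and `q`.
  choose K hK0 hK1 hKmarg hKdiag using fun s =>
    exists_maximal_coupling (condYS_nonneg P hP0 hS s) (sum_condYS P hS s) hq0 hq1
  have hQ' : IsRule fun x s => K s (h x s) := ⟨fun x s yh => hK0 _ _ _, fun x s => hK1 _ _⟩
  refine ⟨fun x s => K s (h x s), hQ', fun yh s => ?_, ?_⟩
  · rw [jointYhatS, sum_sum_mul_of_deterministic P hS hdet (fun y _ => K s y yh), hKmarg,
      mul_comm]
  · rw [risk_eq_sum P hQ']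
    refine sum_le_sum fun s _ => ?_
    rw [sum_sum_mul_of_deterministic P hS hdet (K s) s,
      TV_eq_sum_sub_sum_min ((sum_condYS P hS s).trans hq1.symm), sum_condYS P hS s]
    nlinarith [hKdiag s, margS_nonneg P hP0 s]

end Model

/-- **Theorem 2 (maximal correlation case).** If `Y = h(X, S)` is deterministic,
`P_S(s_max) = 1/2 + δ` with `δ > 0`, `r = min{|𝒮|, |𝒴|} - 1`, `u(t) = max{t, √t}`, and `Q`
is an optimal randomized prediction rule among those with `ρ_m(Ŷ, S) ≤ ε`, then
`E_{s∼P_S}[TV(P_{Ŷ|S=s}, P_{Y|S=s_max})] ≤ (1/2 + 1/(4δ)) u(rε)`. -/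
theorem maxcorr_fair_optimal_inductive_bias
    (P : 𝒳 → 𝒴 → 𝒮 → ℝ)
    (hP0 : ∀ x y s, 0 ≤ P x y s)
    (hP1 : ∑ x, ∑ y, ∑ s, P x y s = 1)
    (hS : ∀ s, 0 < margS P s)
    (h : 𝒳 → 𝒮 → 𝒴) (hdet : ∀ x y s, y ≠ h x s → P x y s = 0)
    (smax : 𝒮) (δ : ℝ) (hδ : 0 < δ) (hsmax : margS P smax = 1 / 2 + δ)
    (ε : ℝ)
    (Q : 𝒳 → 𝒮 → 𝒴 → ℝ) (hQ : IsRule Q)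
    (hfair : maxCorr P Q ≤ ε)
    (hopt : ∀ Q' : 𝒳 → 𝒮 → 𝒴 → ℝ, IsRule Q' → maxCorr P Q' ≤ ε → risk P Q ≤ risk P Q') :
    ∑ s, margS P s * TV (condYhatS P Q s) (condYS P smax)
      ≤ (1 / 2 + 1 / (4 * δ)) *
        max (((min (Fintype.card 𝒮) (Fintype.card 𝒴) : ℝ) - 1) * ε)
          (Real.sqrt (((min (Fintype.card 𝒮) (Fintype.card 𝒴) : ℝ) - 1) * ε)) := by
  have hw0 := margS_nonneg P hP0
  have hw1 := sum_margS P hP1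
  have hε : 0 ≤ ε := (maxCorr_eq_maximalCorrelation P hQ ▸ maximalCorrelation_nonneg _).trans hfair
  obtain ⟨Q', hQ', hQ'joint, hQ'risk⟩ := exists_rule_jointYhatS_eq_mul_and_risk_le P hP0 hS hdet
    (condYS_nonneg P hP0 hS smax) (sum_condYS P hS smax)
  have hQ'fair : maxCorr P Q' ≤ ε := by
    rwa [maxCorr_eq_maximalCorrelation P hQ',
      maximalCorrelation_eq_zero_of_eq_mul hQ'joint (sum_condYS P hS smax)]
  set u := max (((min (Fintype.card 𝒮) (Fintype.card 𝒴) : ℝ) - 1) * ε)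
    (Real.sqrt (((min (Fintype.card 𝒮) (Fintype.card 𝒴) : ℝ) - 1) * ε))
  set α := ∑ s, margS P s * TV (condYhatS P Q s) (margYhat P Q)
  set β := TV (margYhat P Q) (condYS P smax)
  have hα : α ≤ 1 / 2 * u := sum_margS_mul_TV_condYhatS_margYhat_le P hP0 hP1 hS hQ hfair
  have hβ : β ≤ α / (2 * δ) := by
    have hrisk := (sum_margS_mul_TV_condYhatS_condYS_le_risk P hP0 hS hQ).trans
      ((hopt Q' hQ' hQ'fair).trans hQ'risk)
    have hchain := sum_mul_TV_add_le hw0 hw1 (condYhatS P Q) (condYS P) (margYhat P Q) smax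
    rw [le_div_iff₀ (by positivity)]
    rw [hsmax] at hchain
    linarith
  calc _ ≤ α + β := sum_mul_TV_le_add hw0 hw1 _ (margYhat P Q) _
    _ ≤ 1 / 2 * u + 1 / 2 * u / (2 * δ) := add_le_add hα (hβ.trans (by gcongr))
    _ = (1 / 2 + 1 / (4 * δ)) * u := by field_simp; ring
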